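/- Fix p ∈ (0,1). With Υ_p(a) := ∫_{β(a)}^{α(a)} η_{p,a}(x)/√(Q_{p,a}(x)) dx for a > a_*, where β(a) < α(a) are the two positive roots of Q_{p,a} and η_{p,a}(x) := −(p+1)·a·x^(1−p) − (2−p)·a·x^(−1−p) + (1−p)²·(2p+1)·x^(p+1) + 2·(4p²−4p+1)·x^(p−1) + p²·(3−2p)·x^(p−3), one has the one-sided limit lim_{a → a_*⁺} Υ_p(a) = −√2·p^(p/2)·(1−p)^((1−p)/2)·π. -/

import Mathlib

open Real Set MeasureTheory intervalIntegral Filter Topology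

/-- The function `Q_{p,a}(x) = a·x^(2(1−p)) − (1−p)²·x² − p²`. -/
noncomputable def Qfun (p a x : ℝ) : ℝ :=
  a * x ^ (2 * (1 - p)) - (1 - p) ^ 2 * x ^ 2 - p ^ 2

/-- The integrand `η_{p,a}` of the second variation of the `p`-elastic energy in the unit
normal direction. -/
noncomputable def etafun (p a x : ℝ) : ℝ :=
  -(p + 1) * a * x ^ (1 - p) - (2 - p) * a * x ^ (-1 - p)
    + (1 - p) ^ 2 * (2 * p + 1) * x ^ (p + 1)
    + 2 * (4 * p ^ 2 - 4 * p + 1) * x ^ (p - 1)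
    + p ^ 2 * (3 - 2 * p) * x ^ (p - 3)

/-- The second variation `Υ_p(a) = ∫_{β(a)}^{α(a)} η_{p,a}(x)/√(Q_{p,a}(x)) dx` of the
`p`-elastic energy over one half-period of the curvature for the unit normal variation. -/
noncomputable def Ups (p : ℝ) (β α : ℝ → ℝ) (a : ℝ) : ℝ :=
  ∫ x in β a..α a, etafun p a x / Real.sqrt (Qfun p a x)


/-!
As `a ↓ a_*` the two roots `β(a) < α(a)` of `Q_{p,a}` merge into the double root
`x_* = √(p/(1-p))` of `Q_{p,a_*}`: writing `Q_{p,a}(x) = x^(2(1-p))·(a - h(x))`, the function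
`h = rootLevel p` decreases and then increases around its minimum `h(x_*) = a_*`. Near
`(a_*, x_*)` the second derivative `∂ₓ²Q_{p,a}` is close to `-2c` with `c = 2p(1-p)²`, so by
concavity `Q_{p,a}(x) = R_a(x)·(α - x)(x - β)` with `R_a → c` uniformly on `[β, α]`. The
substitution `x = (α+β)/2 + (α-β)/2·sin θ` cancels `√((α - x)(x - β))` against the Jacobian,
leaving `∫_{-π/2}^{π/2} η_{p,a}(x)/√(R_a(x)) dθ`, whose integrand tends uniformly to
`η_{p,a_*}(x_*)/√c`. Hence `Υ_p(a) → π·η_{p,a_*}(x_*)/√c`, and `η_{p,a_*}(x_*) = -2p²·x_*^(p-3)`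
gives the constant.
-/

lemma mul_sub_mul_sub_le_of_deriv2_le {f f' f'' : ℝ → ℝ} {a b m : ℝ}
    (hf : ∀ x ∈ Icc a b, HasDerivAt f (f' x) x ∧ HasDerivAt f' (f'' x) x)
    (ha : f a = 0) (hb : f b = 0) (hf'' : ∀ x ∈ Icc a b, f'' x ≤ -(2 * m)) :
    ∀ x ∈ Icc a b, m * ((b - x) * (x - a)) ≤ f x := by
  set u : ℝ → ℝ := fun x => f x - m * ((b - x) * (x - a))
  have hu' : ∀ x, HasDerivAt (fun x => m * ((b - x) * (x - a))) (m * (a + b - 2 * x)) x :=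
    fun x => (((hasDerivAt_id x).const_sub b).mul ((hasDerivAt_id x).sub_const a)).const_mul m
      |>.congr_deriv (by simp only [id]; ring)
  have hu'' : ∀ x, HasDerivAt (fun x => m * (a + b - 2 * x)) (-(2 * m)) x :=
    fun x => (((hasDerivAt_id x).const_mul 2).const_sub (a + b)).const_mul m
      |>.congr_deriv (by ring)
  have hconc : ConcaveOn ℝ (Icc a b) u := by
    refine concaveOn_of_hasDerivWithinAt2_nonpos (convex_Icc a b)
      (fun x hx => ((hf x hx).1.sub (hu' x)).continuousAt.continuousWithinAt)
      (fun x hx => ((hf x (interior_subset hx)).1.sub (hu' x)).hasDerivWithinAt)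
      (fun x hx => ((hf x (interior_subset hx)).2.sub (hu'' x)).hasDerivWithinAt) ?_
    intro x hx
    linarith [hf'' x (interior_subset hx)]
  intro x hx
  have hab : a ≤ b := hx.1.trans hx.2
  simpa [u, ha, hb] using
    hconc.ge_on_segment (left_mem_Icc.2 hab) (right_mem_Icc.2 hab) (segment_eq_Icc hab ▸ hx)

lemma eventually_forall_Icc_of_eventually_prod {ι α : Type*} [LinearOrder α]
    [TopologicalSpace α] [OrderTopology α] [NoMinOrder α] [NoMaxOrder α] {l : Filter ι}
    {a b : ι → α} {x₀ : α} {P : ι × α → Prop} (ha : Tendsto a l (𝓝 x₀)) (hb : Tendsto b l (𝓝 x₀))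
    (hP : ∀ᶠ z in l ×ˢ 𝓝 x₀, P z) : ∀ᶠ i in l, ∀ x ∈ Icc (a i) (b i), P (i, x) := by
  obtain ⟨Pl, hPl, Px, hPx, hPlx⟩ := eventually_prod_iff.1 hP
  obtain ⟨u, v, hx₀, huv⟩ := mem_nhds_iff_exists_Ioo_subset.1 hPx
  filter_upwards [hPl, ha (Ioo_mem_nhds hx₀.1 hx₀.2), hb (Ioo_mem_nhds hx₀.1 hx₀.2)]
    with i hi hai hbi x hx
  exact hPlx hi (huv ⟨hai.1.trans_le hx.1, hx.2.trans_lt hbi.2⟩)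

lemma eventually_abs_div_mul_sub_le {ι : Type*} {l : Filter ι} {Q Q' Q'' : ι → ℝ → ℝ}
    {a b : ι → ℝ} {x₀ c ε : ℝ} (hε : 0 < ε) (ha : Tendsto a l (𝓝 x₀))
    (hb : Tendsto b l (𝓝 x₀)) (hroot : ∀ᶠ i in l, Q i (a i) = 0 ∧ Q i (b i) = 0)
    (hderiv : ∀ᶠ z in l ×ˢ 𝓝 x₀,
      HasDerivAt (Q z.1) (Q' z.1 z.2) z.2 ∧ HasDerivAt (Q' z.1) (Q'' z.1 z.2) z.2)
    (hQ'' : Tendsto (Function.uncurry Q'') (l ×ˢ 𝓝 x₀) (𝓝 (-(2 * c)))) :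
    ∀ᶠ i in l, ∀ x ∈ Ioo (a i) (b i), |Q i x / ((b i - x) * (x - a i)) - c| ≤ ε := by
  have hnear : ∀ᶠ z in l ×ˢ 𝓝 x₀,
      (HasDerivAt (Q z.1) (Q' z.1 z.2) z.2 ∧ HasDerivAt (Q' z.1) (Q'' z.1 z.2) z.2) ∧
        Q'' z.1 z.2 ∈ Icc (-(2 * (c + ε))) (-(2 * (c - ε))) :=
    hderiv.and (hQ''.eventually (Icc_mem_nhds (show -(2 * (c + ε)) < -(2 * c) by linarith)
      (show -(2 * c) < -(2 * (c - ε)) by linarith)))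
  filter_upwards [hroot, eventually_forall_Icc_of_eventually_prod ha hb hnear]
    with i ⟨hai, hbi⟩ hi x hx
  have hlow := mul_sub_mul_sub_le_of_deriv2_le (fun y hy => (hi y hy).1) hai hbi
    (fun y hy => (hi y hy).2.2) x (Ioo_subset_Icc_self hx)
  have hupp := mul_sub_mul_sub_le_of_deriv2_le (f := fun y => -Q i y) (m := -(c + ε))
    (fun y hy => ⟨(hi y hy).1.1.neg, (hi y hy).1.2.neg⟩) (by simp [hai]) (by simp [hbi])
    (fun y hy => by linarith [(hi y hy).2.1]) x (Ioo_subset_Icc_self hx)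
  have hw : 0 < (b i - x) * (x - a i) := mul_pos (sub_pos.2 hx.2) (sub_pos.2 hx.1)
  rw [abs_sub_le_iff, sub_le_iff_le_add, div_le_iff₀ hw, sub_le_comm, le_div_iff₀ hw]
  constructor <;> linarith

lemma image_affine_sin_Ioo {a b : ℝ} (hab : a < b) :
    (fun θ => (b - a) / 2 * sin θ + (a + b) / 2) '' Ioo (-(π / 2)) (π / 2) = Ioo a b := by
  have hsin : sin '' Ioo (-(π / 2)) (π / 2) = Ioo (-1) 1 :=
    sinPartialHomeomorph.image_source_eq_target
  rw [← image_image (fun x => (b - a) / 2 * x + (a + b) / 2) sin, hsin,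
    image_affine_Ioo (by linarith)]
  congr 1 <;> ring

lemma setIntegral_Ioo_eq_integral_sin {E : Type*} [NormedAddCommGroup E] [NormedSpace ℝ E]
    {a b : ℝ} (hab : a < b) (f : ℝ → E) :
    ∫ x in Ioo a b, f x = ∫ θ in Ioo (-(π / 2)) (π / 2),
      ((b - a) / 2 * cos θ) • f ((b - a) / 2 * sin θ + (a + b) / 2) := by
  have hr : 0 < (b - a) / 2 := by linarith
  rw [← image_affine_sin_Ioo hab, integral_image_eq_integral_abs_deriv_smul measurableSet_Ioo
    (fun θ _ => (((hasDerivAt_sin θ).const_mul _).add_const _).hasDerivWithinAt)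
    (fun θ₁ h₁ θ₂ h₂ h => sinPartialHomeomorph.injOn h₁ h₂ (by simpa [hr.ne'] using h))]
  refine setIntegral_congr_fun measurableSet_Ioo fun θ hθ => ?_
  rw [abs_of_pos (mul_pos hr (cos_pos_of_mem_Ioo hθ))]

lemma tendsto_setIntegral_of_tendsto_prod_principal {ι α E : Type*} [MeasurableSpace α]
    [NormedAddCommGroup E] [NormedSpace ℝ E] [CompleteSpace E] {μ : Measure α} {s : Set α}
    {l : Filter ι} [l.IsCountablyGenerated] {F : ι → α → E} {L : E} (hs : MeasurableSet s)
    (hμs : μ s ≠ ⊤)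
    (hF : ∀ᶠ i in l, AEStronglyMeasurable (F i) (μ.restrict s))
    (hlim : Tendsto (Function.uncurry F) (l ×ˢ 𝓟 s) (𝓝 L)) :
    Tendsto (fun i => ∫ x in s, F i x ∂μ) l (𝓝 (μ.real s • L)) := by
  have : IsFiniteMeasure (μ.restrict s) := isFiniteMeasure_restrict.2 hμs
  rw [← setIntegral_const]
  refine tendsto_integral_filter_of_dominated_convergence (fun _ => ‖L‖ + 1) hF ?_
    (integrable_const _) ((ae_restrict_iff' hs).2 (.of_forall fun x hx => ?_))
  · have hball := eventually_prod_principal_iff.1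
      (hlim.eventually (Metric.closedBall_mem_nhds L one_pos))
    filter_upwards [hball] with i hi
    refine (ae_restrict_iff' hs).2 (.of_forall fun x hx => ?_)
    have := dist_eq_norm (F i x) L ▸ hi x hx
    linarith [norm_le_insert' (F i x) L]
  · exact hlim.comp (tendsto_id.prodMk (tendsto_principal.2 (.of_forall fun _ => hx)))

theorem tendsto_intervalIntegral_div_sqrt_of_roots_tendsto {ι : Type*} {l : Filter ι}
    [l.IsCountablyGenerated] {Q Q' Q'' η : ι → ℝ → ℝ} {a b : ι → ℝ} {x₀ c η₀ : ℝ} (hc : 0 < c)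
    (ha : Tendsto a l (𝓝 x₀)) (hb : Tendsto b l (𝓝 x₀))
    (hroot : ∀ᶠ i in l, a i < b i ∧ Q i (a i) = 0 ∧ Q i (b i) = 0)
    (hderiv : ∀ᶠ z in l ×ˢ 𝓝 x₀,
      HasDerivAt (Q z.1) (Q' z.1 z.2) z.2 ∧ HasDerivAt (Q' z.1) (Q'' z.1 z.2) z.2)
    (hQ'' : Tendsto (Function.uncurry Q'') (l ×ˢ 𝓝 x₀) (𝓝 (-(2 * c))))
    (hη : Tendsto (Function.uncurry η) (l ×ˢ 𝓝 x₀) (𝓝 η₀))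
    (hmeas : ∀ i, Measurable (η i) ∧ Measurable (Q i)) :
    Tendsto (fun i => ∫ x in a i..b i, η i x / √(Q i x)) l (𝓝 (π * (η₀ / √c))) := by
  set T := Ioo (-(π / 2)) (π / 2)
  set X : ι → ℝ → ℝ := fun i θ => (b i - a i) / 2 * sin θ + (a i + b i) / 2
  have hgood : ∀ᶠ z in l ×ˢ 𝓟 T, a z.1 < b z.1 ∧ z.2 ∈ T :=
    (hroot.mono fun _ hi => hi.1).prod_inl _ |>.and (Eventually.prod_inr (by simp) _)
  have hXmem : ∀ᶠ z in l ×ˢ 𝓟 T, X z.1 z.2 ∈ Ioo (a z.1) (b z.1) :=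
    hgood.mono fun z hz => image_affine_sin_Ioo hz.1 ▸ mem_image_of_mem _ hz.2
  have hX : Tendsto (Function.uncurry X) (l ×ˢ 𝓟 T) (𝓝 x₀) :=
    tendsto_of_tendsto_of_tendsto_of_le_of_le' (ha.comp tendsto_fst) (hb.comp tendsto_fst)
      (hXmem.mono fun _ hz => hz.1.le) (hXmem.mono fun _ hz => hz.2.le)
  have hR : Tendsto (fun z : ι × ℝ => Q z.1 (X z.1 z.2) /
      ((b z.1 - X z.1 z.2) * (X z.1 z.2 - a z.1))) (l ×ˢ 𝓟 T) (𝓝 c) := by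
    refine Metric.tendsto_nhds.2 fun ε hε => ?_
    filter_upwards [(eventually_abs_div_mul_sub_le (half_pos hε) ha hb
      (hroot.mono fun _ hi => hi.2) hderiv hQ'').prod_inl _, hXmem] with z hz hzX
    exact (hz _ hzX).trans_lt (half_lt_self hε)
  have hlim : Tendsto (Function.uncurry fun i θ =>
      ((b i - a i) / 2 * cos θ) • (η i (X i θ) / √(Q i (X i θ)))) (l ×ˢ 𝓟 T)
      (𝓝 (η₀ / √c)) := by
    refine ((hη.comp (tendsto_fst.prodMk hX)).div hR.sqrt (sqrt_pos.2 hc).ne').congr' ?_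
    filter_upwards [hgood] with ⟨i, θ⟩ ⟨hab, hθ⟩
    have hrc : 0 < (b i - a i) / 2 * cos θ := mul_pos (by linarith) (cos_pos_of_mem_Ioo hθ)
    have hw : (b i - X i θ) * (X i θ - a i) = ((b i - a i) / 2 * cos θ) ^ 2 := by
      linear_combination (-((b i - a i) / 2) ^ 2) * sin_sq_add_cos_sq θ
    change η i (X i θ) / √(Q i (X i θ) / ((b i - X i θ) * (X i θ - a i))) = _
    rw [hw, sqrt_div' _ (sq_nonneg _), sqrt_sq hrc.le, div_div_eq_mul_div, mul_comm,
      mul_div_assoc]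
    rfl
  have hsubst : ∀ᶠ i in l,
      ∫ θ in T, ((b i - a i) / 2 * cos θ) • (η i (X i θ) / √(Q i (X i θ)))
        = ∫ x in a i..b i, η i x / √(Q i x) := hroot.mono fun i hi => by
    rw [intervalIntegral.integral_of_le hi.1.le, integral_Ioc_eq_integral_Ioo,
      setIntegral_Ioo_eq_integral_sin hi.1]
  have hT : volume.real T = π := by
    rw [Real.volume_real_Ioo_of_le (by linarith [pi_pos])]; ring
  refine hT ▸ (tendsto_setIntegral_of_tendsto_prod_principal measurableSet_Ioo
    measure_Ioo_lt_top.ne (.of_forall fun i => ?_) hlim).congr' hsubst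
  obtain ⟨hηi, hQi⟩ := hmeas i
  fun_prop

lemma tendsto_of_tendsto_comp_of_strictAntiOn_of_strictMonoOn {ι α β : Type*}
    [LinearOrder α] [TopologicalSpace α] [OrderTopology α] [DenselyOrdered α]
    [LinearOrder β] [TopologicalSpace β] [OrderTopology β] {l : Filter ι} {h : α → β}
    {f : ι → α} {u x₀ : α} (hu : u < x₀) (hanti : StrictAntiOn h (Ioc u x₀))
    (hmono : StrictMonoOn h (Ici x₀)) (hf : ∀ᶠ i in l, u < f i)
    (hhf : Tendsto (h ∘ f) l (𝓝 (h x₀))) : Tendsto f l (𝓝 x₀) := by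
  refine tendsto_order.2 ⟨fun v hv => ?_, fun w hw => ?_⟩
  · obtain ⟨w, hw, hwx⟩ := exists_between (max_lt hu hv)
    have huw : u < w := (le_max_left u v).trans_lt hw
    filter_upwards [hf, (tendsto_order.1 hhf).2 _ (hanti ⟨huw, hwx.le⟩ ⟨hu, le_rfl⟩ hwx)]
      with i hui hi
    by_contra! hle
    have hfw : f i ≤ w := hle.trans ((le_max_right u v).trans hw.le)
    exact hi.not_ge (hanti.antitoneOn ⟨hui, hfw.trans hwx.le⟩ ⟨huw, hwx.le⟩ hfw)
  · filter_upwards [(tendsto_order.1 hhf).2 _ (hmono le_rfl hw.le hw)] with i hi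
    by_contra! hle
    exact hi.not_ge (hmono.monotoneOn hw.le (hw.le.trans hle) hle)

noncomputable def Qfun' (p a x : ℝ) : ℝ :=
  a * (2 * (1 - p)) * x ^ (2 * (1 - p) - 1) - (1 - p) ^ 2 * (2 * x)

noncomputable def Qfun'' (p a x : ℝ) : ℝ :=
  a * (2 * (1 - p)) * (2 * (1 - p) - 1) * x ^ (2 * (1 - p) - 2) - 2 * (1 - p) ^ 2

lemma hasDerivAt_Qfun (p a : ℝ) {x : ℝ} (hx : x ≠ 0) :
    HasDerivAt (Qfun p a) (Qfun' p a x) x := by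
  have h := (((hasDerivAt_rpow_const (p := 2 * (1 - p)) (Or.inl hx)).const_mul a).sub
    ((hasDerivAt_pow 2 x).const_mul ((1 - p) ^ 2))).sub_const (p ^ 2)
  exact h.congr_deriv (by simp only [Qfun']; ring)

lemma hasDerivAt_Qfun' (p a : ℝ) {x : ℝ} (hx : x ≠ 0) :
    HasDerivAt (Qfun' p a) (Qfun'' p a x) x := by
  have h := ((hasDerivAt_rpow_const (p := 2 * (1 - p) - 1) (Or.inl hx)).const_mul
    (a * (2 * (1 - p)))).sub (((hasDerivAt_id x).const_mul 2).const_mul ((1 - p) ^ 2))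
  exact h.congr_deriv (by simp only [Qfun'']; ring_nf)

lemma continuousAt_Qfun'' (p : ℝ) {z : ℝ × ℝ} (hz : z.2 ≠ 0) :
    ContinuousAt (Function.uncurry (Qfun'' p)) z := by
  unfold Function.uncurry Qfun''
  fun_prop (disch := exact Or.inl hz)

lemma continuousAt_etafun (p : ℝ) {z : ℝ × ℝ} (hz : z.2 ≠ 0) :
    ContinuousAt (Function.uncurry (etafun p)) z := by
  unfold Function.uncurry etafun
  fun_prop (disch := exact Or.inl hz)

noncomputable def xStar (p : ℝ) : ℝ := √(p / (1 - p))

noncomputable def rootLevel (p x : ℝ) : ℝ :=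
  (1 - p) ^ 2 * x ^ (2 * p) + p ^ 2 * x ^ (2 * p - 2)

section

variable {p : ℝ}

lemma xStar_pos (hp0 : 0 < p) (hp1 : p < 1) : 0 < xStar p :=
  sqrt_pos.2 (div_pos hp0 (sub_pos.2 hp1))

lemma xStar_sq (hp0 : 0 < p) (hp1 : p < 1) : xStar p ^ 2 = p / (1 - p) :=
  sq_sqrt (div_pos hp0 (sub_pos.2 hp1)).le

lemma aStar_eq (hp0 : 0 < p) (hp1 : p < 1) :
    p ^ p * (1 - p) ^ (1 - p) = (1 - p) * xStar p ^ (2 * p) := by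
  have hq : 0 < 1 - p := sub_pos.2 hp1
  rw [show (2 : ℝ) * p = (2 : ℕ) * p by norm_num, rpow_natCast_mul (xStar_pos hp0 hp1).le,
    xStar_sq hp0 hp1, div_rpow hp0.le hq.le, rpow_sub hq, rpow_one]
  field_simp

lemma Qfun_eq_mul_sub_rootLevel (a : ℝ) {x : ℝ} (hx : 0 < x) :
    Qfun p a x = x ^ (2 * (1 - p)) * (a - rootLevel p x) := by
  have h1 : x ^ (2 * (1 - p)) * x ^ (2 * p) = x ^ 2 := by
    rw [← rpow_add hx, ← rpow_natCast]; ring_nf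
  have h2 : x ^ (2 * (1 - p)) * x ^ (2 * p - 2) = 1 := by
    rw [← rpow_add hx]; ring_nf; exact rpow_zero x
  rw [Qfun, rootLevel]
  linear_combination (1 - p) ^ 2 * h1 + p ^ 2 * h2

lemma rootLevel_xStar (hp0 : 0 < p) (hp1 : p < 1) :
    rootLevel p (xStar p) = p ^ p * (1 - p) ^ (1 - p) := by
  have hx := xStar_pos hp0 hp1
  rw [rootLevel, aStar_eq hp0 hp1, show 2 * p - 2 = 2 * p - ((2 : ℕ) : ℝ) by norm_num,
    rpow_sub_natCast hx.ne', xStar_sq hp0 hp1]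
  field_simp
  ring

lemma hasDerivAt_rootLevel (hp0 : 0 < p) (hp1 : p < 1) {x : ℝ} (hx : 0 < x) :
    HasDerivAt (rootLevel p)
      (2 * p * (1 - p) ^ 2 * x ^ (2 * p - 3) * (x ^ 2 - xStar p ^ 2)) x := by
  have h := ((hasDerivAt_rpow_const (p := 2 * p) (Or.inl hx.ne')).const_mul ((1 - p) ^ 2)).add
    ((hasDerivAt_rpow_const (p := 2 * p - 2) (Or.inl hx.ne')).const_mul (p ^ 2))
  refine h.congr_deriv ?_
  have hq : 1 - p ≠ 0 := (sub_pos.2 hp1).ne'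
  rw [show 2 * p - 1 = 2 * p - 3 + (2 : ℕ) by push_cast; ring,
    show 2 * p - 2 - 1 = 2 * p - 3 by ring, rpow_add_natCast hx.ne', xStar_sq hp0 hp1]
  field_simp
  ring

lemma strictAntiOn_rootLevel (hp0 : 0 < p) (hp1 : p < 1) :
    StrictAntiOn (rootLevel p) (Ioc 0 (xStar p)) := by
  refine strictAntiOn_of_hasDerivWithinAt_neg (convex_Ioc 0 (xStar p))
    (fun x hx => (hasDerivAt_rootLevel hp0 hp1 hx.1).continuousAt.continuousWithinAt)
    (fun x hx => (hasDerivAt_rootLevel hp0 hp1 (interior_subset hx).1).hasDerivWithinAt)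
    fun x hx => ?_
  rw [interior_Ioc] at hx
  exact mul_neg_of_pos_of_neg (by have := hx.1; positivity)
    (sub_neg.2 (pow_lt_pow_left₀ hx.2 hx.1.le two_ne_zero))

lemma strictMonoOn_rootLevel (hp0 : 0 < p) (hp1 : p < 1) :
    StrictMonoOn (rootLevel p) (Ici (xStar p)) := by
  have hx₀ := xStar_pos hp0 hp1
  refine strictMonoOn_of_hasDerivWithinAt_pos (convex_Ici (xStar p))
    (fun x hx => (hasDerivAt_rootLevel hp0 hp1 (hx₀.trans_le hx)).continuousAt.continuousWithinAt)
    (fun x hx =>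
      (hasDerivAt_rootLevel hp0 hp1 (hx₀.trans_le (interior_subset hx))).hasDerivWithinAt)
    fun x hx => ?_
  rw [interior_Ici] at hx
  have hx0 : 0 < x := hx₀.trans hx
  exact mul_pos (by positivity) (sub_pos.2 (pow_lt_pow_left₀ hx hx₀.le two_ne_zero))

lemma tendsto_xStar_of_Qfun_eq_zero (hp0 : 0 < p) (hp1 : p < 1) {f : ℝ → ℝ}
    (hf : ∀ a, p ^ p * (1 - p) ^ (1 - p) < a → 0 < f a ∧ Qfun p a (f a) = 0) :
    Tendsto f (𝓝[>] (p ^ p * (1 - p) ^ (1 - p))) (𝓝 (xStar p)) := by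
  have hlevel : ∀ a, p ^ p * (1 - p) ^ (1 - p) < a → rootLevel p (f a) = a := fun a ha => by
    obtain ⟨hfa, hQ⟩ := hf a ha
    rw [Qfun_eq_mul_sub_rootLevel a hfa] at hQ
    linarith [(mul_eq_zero.1 hQ).resolve_left (rpow_pos_of_pos hfa _).ne']
  refine tendsto_of_tendsto_comp_of_strictAntiOn_of_strictMonoOn (xStar_pos hp0 hp1)
    (strictAntiOn_rootLevel hp0 hp1) (strictMonoOn_rootLevel hp0 hp1)
    (eventually_nhdsWithin_of_forall fun a ha => (hf a ha).1) ?_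
  rw [rootLevel_xStar hp0 hp1]
  exact tendsto_nhdsWithin_of_tendsto_nhds tendsto_id |>.congr'
    (eventually_nhdsWithin_of_forall fun a ha => (hlevel a ha).symm)

lemma Qfun''_aStar_xStar (hp0 : 0 < p) (hp1 : p < 1) :
    Qfun'' p (p ^ p * (1 - p) ^ (1 - p)) (xStar p) = -(2 * (2 * p * (1 - p) ^ 2)) := by
  have h : xStar p ^ (2 * p) * xStar p ^ (2 * (1 - p) - 2) = 1 := by
    rw [← rpow_add (xStar_pos hp0 hp1)]; ring_nf; exact rpow_zero _
  rw [Qfun'', aStar_eq hp0 hp1]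
  linear_combination (1 - p) * (2 * (1 - p)) * (2 * (1 - p) - 1) * h

lemma etafun_aStar_xStar (hp0 : 0 < p) (hp1 : p < 1) :
    etafun p (p ^ p * (1 - p) ^ (1 - p)) (xStar p) = -2 * p ^ 2 * xStar p ^ (p - 3) := by
  have hx := xStar_pos hp0 hp1
  have hq : 1 - p ≠ 0 := (sub_pos.2 hp1).ne'
  have hpow : ∀ t : ℝ, ∀ n : ℕ, xStar p ^ (t + n) = xStar p ^ t * xStar p ^ n :=
    fun t n => rpow_add_natCast hx.ne' t n
  have h4 : xStar p ^ (p + 1) = xStar p ^ (p - 3) * (xStar p ^ 2) ^ 2 := by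
    rw [show p + 1 = p - 3 + (4 : ℕ) by push_cast; ring, hpow]; ring
  have h2 : xStar p ^ (p - 1) = xStar p ^ (p - 3) * xStar p ^ 2 := by
    rw [show p - 1 = p - 3 + (2 : ℕ) by push_cast; ring, hpow]
  have g1 : xStar p ^ (2 * p) * xStar p ^ (1 - p) = xStar p ^ (p + 1) := by
    rw [← rpow_add hx]; ring_nf
  have g2 : xStar p ^ (2 * p) * xStar p ^ (-1 - p) = xStar p ^ (p - 1) := by
    rw [← rpow_add hx]; ring_nf
  have hs : (1 - p) * xStar p ^ 2 = p := by rw [xStar_sq hp0 hp1]; field_simp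
  rw [etafun, aStar_eq hp0 hp1]
  linear_combination (-(p + 1) * (1 - p)) * g1 + (-(2 - p) * (1 - p)) * g2
    + (-(p + 1) * (1 - p) + (1 - p) ^ 2 * (2 * p + 1)) * h4
    + (-(2 - p) * (1 - p) + 2 * (2 * p - 1) ^ 2) * h2
    + xStar p ^ (p - 3) * (-2 * p ^ 2 * xStar p ^ 2 + 2 * p ^ 2 - 5 * p) * hs

lemma etafun_aStar_xStar_div_sqrt (hp0 : 0 < p) (hp1 : p < 1) :
    etafun p (p ^ p * (1 - p) ^ (1 - p)) (xStar p) / √(2 * p * (1 - p) ^ 2)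
      = -(√2 * p ^ (p / 2) * (1 - p) ^ ((1 - p) / 2)) := by
  have hq : 0 < 1 - p := sub_pos.2 hp1
  set u := √p with hu_def
  set v := √(1 - p) with hv_def
  have hu : 0 < u := sqrt_pos.2 hp0
  have hv : 0 < v := sqrt_pos.2 hq
  have hu2 : u ^ 2 = p := sq_sqrt hp0.le
  have hv2 : v ^ 2 = 1 - p := sq_sqrt hq.le
  have hx : xStar p = u / v := sqrt_div' p hq.le
  have hpu : p ^ (p / 2) = u ^ p := by rw [hu_def, sqrt_eq_rpow, ← rpow_mul hp0.le]; ring_nf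
  have hqv : (1 - p) ^ ((1 - p) / 2) = v / v ^ p := by
    rw [← rpow_one_sub' hv.le (sub_pos.2 hp1).ne', hv_def, sqrt_eq_rpow, ← rpow_mul hq.le]
    ring_nf
  have hc : √(2 * p * (1 - p) ^ 2) = √2 * u * v ^ 2 := by
    rw [sqrt_mul (by positivity), sqrt_mul zero_le_two, sqrt_sq hq.le, hv2]
  have h2 : √2 ^ 2 = 2 := sq_sqrt zero_le_two
  rw [etafun_aStar_xStar hp0 hp1, show p - 3 = p - ((3 : ℕ) : ℝ) by norm_num,
    rpow_sub_natCast (xStar_pos hp0 hp1).ne', hx, div_rpow hu.le hv.le, hpu, hqv, hc]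
  field_simp
  rw [h2, ← hu2]
  ring

end

/-- For fixed `p ∈ (0,1)`, one has the one-sided limit
`lim_{a → a_*⁺} Υ_p(a) = −√2·p^(p/2)·(1−p)^((1−p)/2)·π`. -/
theorem Ups_tendsto (p : ℝ) (hp : p ∈ Set.Ioo (0 : ℝ) 1)
    (β α : ℝ → ℝ)
    (hroots : ∀ a : ℝ, p ^ p * (1 - p) ^ (1 - p) < a →
      0 < β a ∧ β a < α a ∧ Qfun p a (β a) = 0 ∧ Qfun p a (α a) = 0 ∧
      ∀ x ∈ Set.Ioo (β a) (α a), 0 < Qfun p a x) :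
    Filter.Tendsto (Ups p β α)
      (nhdsWithin (p ^ p * (1 - p) ^ (1 - p)) (Set.Ioi (p ^ p * (1 - p) ^ (1 - p))))
      (nhds (-(Real.sqrt 2 * p ^ (p / 2) * (1 - p) ^ ((1 - p) / 2) * Real.pi))) := by
  obtain ⟨hp0, hp1⟩ := hp
  have hx₀ := xStar_pos hp0 hp1
  have hβ := tendsto_xStar_of_Qfun_eq_zero hp0 hp1 fun a ha =>
    ⟨(hroots a ha).1, (hroots a ha).2.2.1⟩
  have hα := tendsto_xStar_of_Qfun_eq_zero hp0 hp1 fun a ha =>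
    ⟨(hroots a ha).1.trans (hroots a ha).2.1, (hroots a ha).2.2.2.1⟩
  have hnhds : 𝓝[>] (p ^ p * (1 - p) ^ (1 - p)) ×ˢ 𝓝 (xStar p)
      ≤ 𝓝 (p ^ p * (1 - p) ^ (1 - p), xStar p) :=
    nhds_prod_eq (X := ℝ) (Y := ℝ) ▸ prod_mono nhdsWithin_le_nhds le_rfl
  have hlim := tendsto_intervalIntegral_div_sqrt_of_roots_tendsto (Q' := Qfun' p)
    (c := 2 * p * (1 - p) ^ 2) (by have := sub_pos.2 hp1; positivity) hβ hα
    (eventually_nhdsWithin_of_forall fun a ha =>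
      let ⟨_, hlt, hβa, hαa, _⟩ := hroots a ha; ⟨hlt, hβa, hαa⟩)
    ((eventually_gt_nhds hx₀).prod_inr _ |>.mono fun z hz =>
      ⟨hasDerivAt_Qfun p z.1 hz.ne', hasDerivAt_Qfun' p z.1 hz.ne'⟩)
    (Qfun''_aStar_xStar hp0 hp1 ▸ (continuousAt_Qfun'' p hx₀.ne').tendsto.mono_left hnhds)
    ((continuousAt_etafun p hx₀.ne').tendsto.mono_left hnhds)
    fun a => ⟨by unfold etafun; fun_prop, by unfold Qfun; fun_prop⟩
  rwa [Function.uncurry_apply_pair, etafun_aStar_xStar_div_sqrt hp0 hp1, mul_neg,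
    mul_comm π] at hlim
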